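/- For every finite subset I ⊆ C, every vI ∈ Seq(I), and every s ∈ {1,…,n}, the element [f_{vI}] lies in U(𝔫)_I and B_I(z_s)([f_{vI}]) = A_{vI}(t_I) · ∑_{i ∈ I} a(i,s)/(t_i − z_s) in ℂ(t). -/

import Mathlib

/- STATEMENT 3.
`𝔫` is the free Lie algebra on generators `f i`, `i ∈ C`, and `U(𝔫)` is identified with the
free associative algebra `FreeAlgebra ℂ C` (the bracket being the commutator).  For a nodup
list `vI = (i₁,…,i_N)` enumerating `I ⊆ C`, `f_{vI} = f_{i_N}⋯f_{i₁}` (`mono vI`) and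
`[f_{vI}] = ad(f_{i_N})∘⋯∘ad(f_{i₂})(f_{i₁})` (`brkt vI`).  `U(𝔫)_I` is the span of the
monomials `f_{vJ}`, `vJ ∈ Seq(I)` (permutations of `vI`), and `B_I(z_s)` is the linear map
determined by `f_{vJ} ↦ B_{vJ}(t_I;z_s)`.  The theorem: `[f_{vI}] ∈ U(𝔫)_I` and
`B_I(z_s)([f_{vI}]) = A_{vI}(t_I) · ∑_{i∈I} a(i,s)/(t_i − z_s)`. -/

noncomputable section

abbrev FF (C : Type) := FractionRing (MvPolynomial C ℂ)

def tv {C : Type} (i : C) : FF C := algebraMap (MvPolynomial C ℂ) (FF C) (MvPolynomial.X i)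

def cc {C : Type} (w : ℂ) : FF C := algebraMap (MvPolynomial C ℂ) (FF C) (MvPolynomial.C w)

/-- `A_{vI}(t_I) = ∏_{p=2}^N ( ∑_{q<p} a(i_p,i_q)/(t_{i_p} − t_{i_q}) )`. -/
def Afun {C : Type} (a : C → C → ℂ) (l : List C) : FF C :=
  ∏ p : Fin l.length, if p.val = 0 then 1 else
    ∑ q : Fin l.length, if q < p then
      cc (a (l.get p) (l.get q)) / (tv (l.get p) - tv (l.get q)) else 0

/-- `B_{vI}(t_I; z_s) = ∏_{p=1}^N ( a(i_p,s)/(t_{i_p} − z_s) + ∑_{q<p} a(i_p,i_q)/(t_{i_p} − t_{i_q}) )`. -/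
def Bfun {C : Type} (a : C → C → ℂ) (b : C → ℂ) (z : ℂ) (l : List C) : FF C :=
  ∏ p : Fin l.length,
    (cc (b (l.get p)) / (tv (l.get p) - cc z)
      + ∑ q : Fin l.length, if q < p then
          cc (a (l.get p) (l.get q)) / (tv (l.get p) - tv (l.get q)) else 0)

/-- The generator `f i` of `U(𝔫) = FreeAlgebra ℂ C`. -/
def fgen {C : Type} (i : C) : FreeAlgebra ℂ C := FreeAlgebra.ι ℂ i

/-- The monomial `f_{vI} = f_{i_N}·f_{i_{N−1}}⋯f_{i₁}` for `vI = (i₁,…,i_N)`. -/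
def mono {C : Type} (l : List C) : FreeAlgebra ℂ C := (l.reverse.map fgen).prod

def brktRev {C : Type} : List C → FreeAlgebra ℂ C
  | [] => 0
  | [i] => fgen i
  | i :: tl => ⁅fgen i, brktRev tl⁆

/-- The commutator `[f_{vI}] = ad(f_{i_N})∘⋯∘ad(f_{i₂})(f_{i₁})` for `vI = (i₁,…,i_N)`,
computed inside `U(𝔫)` (where the bracket of the Lie ring structure is the commutator). -/
def brkt {C : Type} (l : List C) : FreeAlgebra ℂ C := brktRev l.reverse

/-!
Replace the weights `β_i = a(i,s)/(t_i − z_s)` in `B` by an arbitrary `β : C → ℂ(t)`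
(`weightProd`). Right multiplication of a monomial by `f_k` multiplies its value by `β_k` and
shifts the weight to `β_i + a(i,k)/(t_i − t_k)`; left multiplication by `f_k` multiplies it by
`β_k` plus the interactions `∑_i a(k,i)/(t_k − t_i)` of `k` with all letters. Since
`[f_{vI·k}] = f_k [f_{vI}] − [f_{vI}] f_k`, induction on `vI` with `β` generalized gives
`B([f_{vI}]) = A_{vI} · ∑_{i ∈ I} β_i`: by the symmetry of `a` the shifted weights sum to
`∑ β_i` minus the interactions, and `A_{j :: w}` is itself `weightProd` of `w` for the weight
`a(i,j)/(t_i − t_j)`.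
-/

namespace WeightFunction

variable {C : Type}

def interactionSum (a : C → C → ℂ) (k : C) (l : List C) : FF C :=
  (l.map fun i => cc (a k i) / (tv k - tv i)).sum

def weightProd (a : C → C → ℂ) (β : C → FF C) (l : List C) : FF C :=
  ∏ p : Fin l.length,
    (β (l.get p) + ∑ q : Fin l.length, if q < p then
        cc (a (l.get p) (l.get q)) / (tv (l.get p) - tv (l.get q)) else 0)

def shiftWeight (a : C → C → ℂ) (β : C → FF C) (k : C) : C → FF C :=
  fun i => β i + cc (a i k) / (tv i - tv k)

section weightProd

variable (a : C → C → ℂ)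

theorem interactionSum_cons (k x : C) (w : List C) :
    interactionSum a k (x :: w) = cc (a k x) / (tv k - tv x) + interactionSum a k w := by
  simp [interactionSum]

theorem interactionSum_perm (k : C) {w l : List C} (h : w.Perm l) :
    interactionSum a k w = interactionSum a k l :=
  (h.map _).sum_eq

theorem sum_map_interaction_eq_neg (ha : ∀ i j, a i j = a j i) (k : C) (l : List C) :
    (l.map fun i => cc (a i k) / (tv i - tv k)).sum = -interactionSum a k l := by
  induction l with
  | nil => simp [interactionSum]
  | cons x l ih =>
    rw [List.map_cons, List.sum_cons, ih, interactionSum_cons, ha x k, neg_add, ← div_neg,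
      neg_sub]

theorem sum_map_shiftWeight (ha : ∀ i j, a i j = a j i) (β : C → FF C) (k : C) (l : List C) :
    (l.map (shiftWeight a β k)).sum = (l.map β).sum - interactionSum a k l := by
  unfold shiftWeight
  rw [List.sum_map_add, sum_map_interaction_eq_neg a ha, sub_eq_add_neg]

@[simp]
theorem weightProd_nil (β : C → FF C) : weightProd a β [] = 1 := by
  simp [weightProd]

theorem weightProd_cons (β : C → FF C) (k : C) (w : List C) :
    weightProd a β (k :: w) = β k * weightProd a (shiftWeight a β k) w := by
  unfold weightProd
  refine (Fin.prod_univ_succ _).trans ?_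
  congr 1
  · simp
  · refine Finset.prod_congr rfl fun p _ => ?_
    refine congrArg _ (Fin.sum_univ_succ _) |>.trans ?_
    simp [shiftWeight, Fin.succ_lt_succ_iff, Fin.succ_pos, add_assoc]

theorem weightProd_append_singleton (k : C) (w : List C) (β : C → FF C) :
    weightProd a β (w ++ [k]) = weightProd a β w * (β k + interactionSum a k w) := by
  induction w generalizing β with
  | nil => simp [weightProd_cons, interactionSum]
  | cons x w ih =>
    rw [List.cons_append, weightProd_cons, ih, weightProd_cons, interactionSum_cons]
    simp only [shiftWeight]
    ring

theorem Bfun_eq_weightProd (b : C → ℂ) (z : ℂ) (l : List C) :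
    Bfun a b z l = weightProd a (fun i => cc (b i) / (tv i - cc z)) l :=
  rfl

theorem Afun_cons (j : C) (w : List C) :
    Afun a (j :: w) = weightProd a (fun i => cc (a i j) / (tv i - tv j)) w := by
  unfold Afun weightProd
  refine (Fin.prod_univ_succ _).trans ?_
  simp only [Fin.val_zero, if_true, one_mul]
  refine Finset.prod_congr rfl fun p _ => ?_
  rw [if_neg (show (p.succ : ℕ) ≠ 0 from Nat.succ_ne_zero p)]
  refine (Fin.sum_univ_succ _).trans ?_
  simp [Fin.succ_lt_succ_iff, Fin.succ_pos]

theorem Afun_singleton (k : C) : Afun a [k] = 1 := by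
  rw [Afun_cons, weightProd_nil]

theorem Afun_append_singleton {l : List C} (hl : l ≠ []) (k : C) :
    Afun a (l ++ [k]) = Afun a l * interactionSum a k l := by
  obtain ⟨j, w, rfl⟩ := List.exists_cons_of_ne_nil hl
  rw [List.cons_append, Afun_cons, weightProd_append_singleton, ← Afun_cons,
    interactionSum_cons]

end weightProd

section monomials

theorem mono_cons (k : C) (w : List C) : mono (k :: w) = mono w * fgen k := by
  simp [mono]

theorem mono_singleton (k : C) : mono [k] = fgen k := by
  simp [mono]

theorem mono_append_singleton (k : C) (w : List C) : mono (w ++ [k]) = fgen k * mono w := by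
  simp [mono]

theorem brkt_singleton (k : C) : brkt [k] = fgen k :=
  rfl

theorem brkt_append_singleton {l : List C} (hl : l ≠ []) (k : C) :
    brkt (l ++ [k]) = fgen k * brkt l - brkt l * fgen k := by
  obtain ⟨x, xs, hx⟩ := List.exists_cons_of_ne_nil (mt List.reverse_eq_nil_iff.mp hl)
  rw [brkt, List.reverse_append, List.reverse_singleton, List.singleton_append, hx, brktRev,
    Ring.lie_def, ← hx, brkt]
  exact List.cons_ne_nil x xs

theorem basisFreeMonoid_ofList (w : List C) :
    FreeAlgebra.basisFreeMonoid ℂ C (FreeMonoid.ofList w) = (w.map fgen).prod := by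
  simp [FreeAlgebra.basisFreeMonoid, FreeAlgebra.equivMonoidAlgebraFreeMonoid,
    FreeMonoid.lift_apply]
  rfl

theorem mono_eq_basisFreeMonoid (w : List C) :
    mono w = FreeAlgebra.basisFreeMonoid ℂ C (FreeMonoid.ofList w.reverse) := by
  rw [basisFreeMonoid_ofList, mono]

def permSpan (l : List C) : Submodule ℂ (FreeAlgebra ℂ C) :=
  Submodule.span ℂ (mono '' {w | w.Perm l})

theorem mono_mem_permSpan {w l : List C} (h : w.Perm l) : mono w ∈ permSpan l :=
  Submodule.subset_span ⟨w, h, rfl⟩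

theorem fgen_mul_mem_permSpan (k : C) {l : List C} {x : FreeAlgebra ℂ C} (hx : x ∈ permSpan l) :
    fgen k * x ∈ permSpan (l ++ [k]) := by
  refine Submodule.span_le.mpr ?_
    (Submodule.apply_mem_span_image_of_mem_span (LinearMap.mulLeft ℂ (fgen k)) hx)
  rintro _ ⟨_, ⟨w, hw, rfl⟩, rfl⟩
  rw [LinearMap.mulLeft_apply, ← mono_append_singleton]
  exact mono_mem_permSpan (hw.append_right [k])

theorem mul_fgen_mem_permSpan (k : C) {l : List C} {x : FreeAlgebra ℂ C} (hx : x ∈ permSpan l) :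
    x * fgen k ∈ permSpan (l ++ [k]) := by
  refine Submodule.span_le.mpr ?_
    (Submodule.apply_mem_span_image_of_mem_span (LinearMap.mulRight ℂ (fgen k)) hx)
  rintro _ ⟨_, ⟨w, hw, rfl⟩, rfl⟩
  rw [LinearMap.mulRight_apply, ← mono_cons]
  exact mono_mem_permSpan ((hw.cons k).trans (List.perm_append_singleton k l).symm)

theorem brkt_mem_permSpan (l : List C) : brkt l ∈ permSpan l := by
  induction l using List.reverseRecOn with
  | nil => exact zero_mem _
  | append_singleton l k ih =>
    rcases eq_or_ne l [] with rfl | hl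
    · rw [List.nil_append, brkt_singleton, ← mono_singleton]
      exact mono_mem_permSpan (List.Perm.refl [k])
    · rw [brkt_append_singleton hl k]
      exact sub_mem (fgen_mul_mem_permSpan k ih) (mul_fgen_mem_permSpan k ih)

end monomials

section weightMap

variable (a : C → C → ℂ) (β : C → FF C)

def weightMap : FreeAlgebra ℂ C →ₗ[ℂ] FF C :=
  (FreeAlgebra.basisFreeMonoid ℂ C).constr ℂ fun w => weightProd a β w.toList.reverse

theorem weightMap_mono (w : List C) : weightMap a β (mono w) = weightProd a β w := by
  rw [mono_eq_basisFreeMonoid, weightMap, Module.Basis.constr_basis, FreeMonoid.toList_ofList,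
    List.reverse_reverse]

theorem weightMap_fgen_mul (k : C) {l : List C} {x : FreeAlgebra ℂ C} (hx : x ∈ permSpan l) :
    weightMap a β (fgen k * x) = (β k + interactionSum a k l) * weightMap a β x := by
  refine LinearMap.eqOn_span (f := weightMap a β ∘ₗ LinearMap.mulLeft ℂ (fgen k))
    (g := LinearMap.mulLeft ℂ (β k + interactionSum a k l) ∘ₗ weightMap a β) ?_ hx
  rintro _ ⟨w, hw, rfl⟩
  simp only [LinearMap.comp_apply, LinearMap.mulLeft_apply]
  rw [← mono_append_singleton, weightMap_mono, weightMap_mono, weightProd_append_singleton,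
    interactionSum_perm a k hw, mul_comm]

theorem weightMap_mul_fgen (k : C) {l : List C} {x : FreeAlgebra ℂ C} (hx : x ∈ permSpan l) :
    weightMap a β (x * fgen k) = β k * weightMap a (shiftWeight a β k) x := by
  refine LinearMap.eqOn_span (f := weightMap a β ∘ₗ LinearMap.mulRight ℂ (fgen k))
    (g := LinearMap.mulLeft ℂ (β k) ∘ₗ weightMap a (shiftWeight a β k)) ?_ hx
  rintro _ ⟨w, -, rfl⟩
  simp only [LinearMap.comp_apply, LinearMap.mulLeft_apply, LinearMap.mulRight_apply]
  rw [← mono_cons, weightMap_mono, weightMap_mono, weightProd_cons]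

theorem weightMap_brkt (ha : ∀ i j, a i j = a j i) {l : List C} (hl : l ≠ []) :
    weightMap a β (brkt l) = Afun a l * (l.map β).sum := by
  induction l using List.reverseRecOn generalizing β with
  | nil => exact absurd rfl hl
  | append_singleton l k ih =>
    rcases eq_or_ne l [] with rfl | hl
    · simp [brkt, brktRev, ← mono_singleton, weightMap_mono, weightProd_cons, Afun_singleton]
    · rw [brkt_append_singleton hl k, map_sub, weightMap_fgen_mul a β k (brkt_mem_permSpan l),
        weightMap_mul_fgen a β k (brkt_mem_permSpan l), ih β hl, ih _ hl,
        Afun_append_singleton a hl, List.map_append, List.sum_append,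
        sum_map_shiftWeight a ha]
      simp only [List.map_singleton, List.sum_singleton]
      ring

end weightMap

end WeightFunction

open WeightFunction in
theorem statement3_general {C : Type} [DecidableEq C]
    (n : ℕ) (z : Fin n → ℂ)
    (a : C → C → ℂ) (ha : ∀ i j, a i j = a j i) (b : C → Fin n → ℂ)
    (vI : List C) (hnd : vI.Nodup) (s : Fin n) :
    brkt vI ∈ Submodule.span ℂ (mono '' {l | l ∈ vI.permutations}) ∧
      ∀ φ : FreeAlgebra ℂ C →ₗ[ℂ] FF C,
        (∀ vJ ∈ vI.permutations.toFinset, φ (mono vJ) = Bfun a (fun i => b i s) (z s) vJ) →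
        φ (brkt vI)
          = Afun a vI * ∑ i ∈ vI.toFinset, cc (b i s) / (tv i - cc (z s)) := by
  have hperm : {l | l ∈ vI.permutations} = {w | w.Perm vI} := by
    ext w
    exact List.mem_permutations
  refine ⟨hperm ▸ brkt_mem_permSpan vI, fun φ hφ => ?_⟩
  have hagree : φ (brkt vI) = weightMap a (fun i => cc (b i s) / (tv i - cc (z s))) (brkt vI) := by
    refine LinearMap.eqOn_span ?_ (brkt_mem_permSpan vI)
    rintro _ ⟨w, hw, rfl⟩
    rw [weightMap_mono, ← Bfun_eq_weightProd]
    exact hφ w (List.mem_toFinset.mpr (List.mem_permutations.mpr hw))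
  rcases eq_or_ne vI [] with rfl | hvI
  · simp [brkt, brktRev]
  · rw [hagree, weightMap_brkt a _ ha hvI, List.sum_toFinset _ hnd]

theorem statement3 {C : Type} [Fintype C] [DecidableEq C]
    (n : ℕ) (hn : 1 ≤ n) (z : Fin n → ℂ) (hz : Function.Injective z)
    (a : C → C → ℂ) (ha : ∀ i j, a i j = a j i) (b : C → Fin n → ℂ)
    (vI : List C) (hnd : vI.Nodup) (s : Fin n) :
    brkt vI ∈ Submodule.span ℂ (mono '' {l | l ∈ vI.permutations}) ∧
      ∀ φ : FreeAlgebra ℂ C →ₗ[ℂ] FF C,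
        (∀ vJ ∈ vI.permutations.toFinset, φ (mono vJ) = Bfun a (fun i => b i s) (z s) vJ) →
        φ (brkt vI)
          = Afun a vI * ∑ i ∈ vI.toFinset, cc (b i s) / (tv i - cc (z s)) :=
  statement3_general n z a ha b vI hnd s

end
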